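/- For all natural numbers ℓ and ℓ', the product of Legendre polynomials P_ℓ·P_{ℓ'} lies in the span of the Legendre polynomials P_L with |ℓ − ℓ'| ≤ L ≤ ℓ + ℓ'; moreover the coefficients Γ(L; ℓ, ℓ') := (2L+1)/2 · ∫_{−1}^{1} P_L(t) P_ℓ(t) P_{ℓ'}(t) dt satisfy ∑_{L=0}^{ℓ+ℓ'} Γ(L; ℓ, ℓ') = 1. -/

import Mathlib

/-!
Rodrigues' formula lets one move the `n` derivatives of `(X ^ 2 - 1) ^ n` onto the other factor
of `∫ P_n q` by integrating by parts, the boundary terms vanishing because `±1` are roots of order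
`n`. Hence `P_n` is orthogonal on `[-1, 1]` to every polynomial of degree `< n`, and
`∫ P_n ^ 2 = (2n)! / (2 ^ n n!) ^ 2 * ∫ (1 - t ^ 2) ^ n = 2 / (2n + 1)`. As `deg P_n = n`, the
product `P_ℓ P_ℓ'` is the sum of its Fourier–Legendre terms `Γ(L; ℓ, ℓ') P_L` for `L ≤ ℓ + ℓ'`,
and `Γ(L; ℓ, ℓ') = 0` for `L < |ℓ - ℓ'|` because, for `ℓ ≥ ℓ'` say, `P_L P_ℓ'` has degree `< ℓ`.
Evaluating the expansion at `t = 1`, where every `P_L` equals `1`, gives `∑ Γ = 1`.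
-/

open Polynomial

/-- The `ℓ`-th Legendre polynomial via the Rodrigues formula. -/
noncomputable def legendre (n : ℕ) : Polynomial ℝ :=
  C (1 / ((2 : ℝ) ^ n * n.factorial)) * derivative^[n] ((X ^ 2 - 1) ^ n)

/-- The Legendre linearization coefficients `Γ(L; ℓ, ℓ')`. -/
noncomputable def Γ (L ℓ ℓ' : ℕ) : ℝ :=
  (2 * L + 1 : ℝ) / 2 *
    ∫ t in (-1 : ℝ)..1, (legendre L).eval t * (legendre ℓ).eval t * (legendre ℓ').eval t

open intervalIntegral Finset
open scoped Nat

namespace Polynomial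

theorem iterate_derivative_eq_C_of_natDegree_le {R : Type*} [Semiring R] {p : R[X]} {n : ℕ}
    (hp : p.natDegree ≤ n) : derivative^[n] p = C (n ! * p.coeff n) := by
  have hconst : (derivative^[n] p).natDegree ≤ 0 :=
    (natDegree_iterate_derivative p n).trans (by omega)
  rw [eq_C_of_natDegree_le_zero hconst, coeff_iterate_derivative, zero_add,
    Nat.descFactorial_self, nsmul_eq_mul]

theorem eval_iterate_derivative_X_sub_C_pow_mul {R : Type*} [CommRing R] (c : R) (n : ℕ)
    (q : R[X]) : (derivative^[n] ((X - C c) ^ n * q)).eval c = n ! * q.eval c := by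
  rw [iterate_derivative_mul, eval_finsetSum, sum_eq_single 0]
  · simp [iterate_derivative_X_sub_pow, Nat.descFactorial_self]
  · intro k hk hk0
    have hpos : 0 < n - (n - k) := by have := mem_range.mp hk; omega
    simp [iterate_derivative_X_sub_pow, zero_pow hpos.ne']
  · simp

theorem monic_X_sq_sub_one {R : Type*} [CommRing R] : (X ^ 2 - 1 : R[X]).Monic := by
  simpa using monic_X_pow_sub_C (1 : R) two_ne_zero

theorem natDegree_X_sq_sub_one_pow {R : Type*} [CommRing R] [Nontrivial R] (n : ℕ) :
    ((X ^ 2 - 1) ^ n : R[X]).natDegree = 2 * n := by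
  rw [monic_X_sq_sub_one.natDegree_pow, ← C_1, natDegree_X_pow_sub_C, mul_comm]

theorem coeff_X_sq_sub_one_pow_two_mul {R : Type*} [CommRing R] [Nontrivial R] (n : ℕ) :
    ((X ^ 2 - 1) ^ n : R[X]).coeff (2 * n) = 1 := by
  rw [← natDegree_X_sq_sub_one_pow (R := R) n]
  exact monic_X_sq_sub_one.pow n

theorem le_rootMultiplicity_X_sq_sub_one_pow {R : Type*} [CommRing R] [Nontrivial R] {a : R}
    (ha : a ^ 2 = 1) (n : ℕ) : n ≤ ((X ^ 2 - 1) ^ n : R[X]).rootMultiplicity a := by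
  rw [le_rootMultiplicity_iff (monic_X_sq_sub_one.pow n).ne_zero]
  have hfactor : (X ^ 2 - 1 : R[X]) = (X - C a) * (X + C a) := by
    rw [← C_1, ← ha, C_pow]; ring
  exact hfactor ▸ mul_pow (X - C a) (X + C a) n ▸ dvd_mul_right _ _

theorem exists_eq_sum_smul_of_degree_eq {K : Type*} [Field K] {b : ℕ → K[X]}
    (hb : ∀ n, (b n).degree = n) (N : ℕ) {p : K[X]} (hp : p.degree < N) :
    ∃ c : ℕ → K, p = ∑ n ∈ range N, c n • b n := by
  induction N generalizing p with
  | zero => exact ⟨0, by simpa using hp⟩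
  | succ N ih =>
    set a := p.coeff N / (b N).leadingCoeff
    have hbN : (b N).leadingCoeff ≠ 0 := by
      rw [Ne, leadingCoeff_eq_zero, ← degree_eq_bot, hb]; exact WithBot.natCast_ne_bot N
    have hdeg : (p - a • b N).degree < N := by
      rw [degree_lt_iff_coeff_zero]
      intro m hm
      rcases hm.eq_or_lt with rfl | hlt
      · have hcoeff : (b N).coeff N = (b N).leadingCoeff := by
          rw [leadingCoeff, natDegree_eq_of_degree_eq_some (hb N)]
        rw [coeff_sub, coeff_smul, hcoeff, smul_eq_mul, div_mul_cancel₀ _ hbN, sub_self]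
      · rw [coeff_sub, coeff_smul,
          coeff_eq_zero_of_degree_lt (hp.trans_le (by exact_mod_cast hlt)),
          coeff_eq_zero_of_degree_lt (by rw [hb]; exact_mod_cast hlt), smul_zero, sub_zero]
    obtain ⟨c, hc⟩ := ih hdeg
    refine ⟨Function.update c N a, ?_⟩
    rw [sum_range_succ, Function.update_self, ← sub_eq_iff_eq_add, hc]
    exact sum_congr rfl fun n hn => by rw [Function.update_of_ne (mem_range.mp hn).ne]

theorem integral_iterate_derivative_mul {p : ℝ[X]} {a b : ℝ} {n : ℕ}
    (ha : n ≤ p.rootMultiplicity a) (hb : n ≤ p.rootMultiplicity b) (q : ℝ[X]) :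
    ∫ t in a..b, (derivative^[n] p).eval t * q.eval t =
      (-1) ^ n * ∫ t in a..b, p.eval t * (derivative^[n] q).eval t := by
  induction n generalizing q with
  | zero => simp
  | succ n ih =>
    have hroot_a := isRoot_iterate_derivative_of_lt_rootMultiplicity (Nat.lt_of_succ_le ha)
    have hroot_b := isRoot_iterate_derivative_of_lt_rootMultiplicity (Nat.lt_of_succ_le hb)
    have hparts := integral_mul_deriv_eq_deriv_mul (a := a) (b := b)
      (fun t _ => q.hasDerivAt t) (fun t _ => (derivative^[n] p).hasDerivAt t)
      ((derivative q).continuous.intervalIntegrable _ _)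
      ((derivative (derivative^[n] p)).continuous.intervalIntegrable _ _)
    rw [hroot_a.eq_zero, hroot_b.eq_zero] at hparts
    calc ∫ t in a..b, (derivative^[n + 1] p).eval t * q.eval t
        = -∫ t in a..b, (derivative^[n] p).eval t * (derivative q).eval t := by
          simp only [Function.iterate_succ_apply', mul_comm _ (q.eval _), hparts]
          simp [mul_comm]
      _ = (-1) ^ (n + 1) * ∫ t in a..b, p.eval t * (derivative^[n + 1] q).eval t := by
          rw [ih (Nat.le_of_succ_le ha) (Nat.le_of_succ_le hb), Function.iterate_succ_apply,
            pow_succ]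
          ring

end Polynomial

theorem integral_one_sub_sq_pow_succ (n : ℕ) :
    (2 * n + 3 : ℝ) * ∫ t in (-1 : ℝ)..1, (1 - t ^ 2) ^ (n + 1) =
      (2 * n + 2 : ℝ) * ∫ t in (-1 : ℝ)..1, (1 - t ^ 2) ^ n := by
  have hderiv : ∀ t : ℝ, HasDerivAt (fun t => t * (1 - t ^ 2) ^ (n + 1))
      ((2 * n + 3) * (1 - t ^ 2) ^ (n + 1) - (2 * n + 2) * (1 - t ^ 2) ^ n) t := by
    intro t
    refine ((hasDerivAt_id' t).mul
      (((hasDerivAt_pow 2 t).const_sub 1).pow (n + 1))).congr_deriv ?_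
    simp only [Pi.pow_apply]
    push_cast
    ring
  have hFTC := integral_eq_sub_of_hasDerivAt (a := -1) (b := 1) (fun t _ => hderiv t)
    (by apply Continuous.intervalIntegrable; fun_prop)
  rw [integral_sub (by apply Continuous.intervalIntegrable; fun_prop)
    (by apply Continuous.intervalIntegrable; fun_prop), integral_const_mul,
    integral_const_mul] at hFTC
  simpa only [one_pow, neg_one_sq, sub_self, zero_pow n.succ_ne_zero, mul_zero,
    sub_eq_zero] using hFTC

theorem integral_one_sub_sq_pow (n : ℕ) :
    ∫ t in (-1 : ℝ)..1, (1 - t ^ 2) ^ n = 2 ^ (2 * n + 1) * (n ! : ℝ) ^ 2 / (2 * n + 1)! := by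
  induction n with
  | zero => norm_num
  | succ n ih =>
    have hrec : ∫ t in (-1 : ℝ)..1, (1 - t ^ 2) ^ (n + 1) =
        (2 * n + 2 : ℝ) / (2 * n + 3) * ∫ t in (-1 : ℝ)..1, (1 - t ^ 2) ^ n := by
      rw [div_mul_eq_mul_div, ← integral_one_sub_sq_pow_succ]; field_simp
    have hfact : (2 * (n + 1) + 1)! = (2 * n + 3) * (2 * n + 2) * (2 * n + 1)! := by
      rw [show 2 * (n + 1) + 1 = 2 * n + 1 + 1 + 1 by ring, Nat.factorial_succ,
        Nat.factorial_succ]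
      ring
    rw [hrec, ih, hfact, Nat.factorial_succ n]
    push_cast
    field_simp
    ring

theorem natDegree_legendre_le (n : ℕ) : (legendre n).natDegree ≤ n := by
  refine (natDegree_C_mul_le _ _).trans ((natDegree_iterate_derivative _ _).trans ?_)
  rw [natDegree_X_sq_sub_one_pow]; omega

theorem degree_legendre (n : ℕ) : (legendre n).degree = n := by
  refine degree_eq_of_le_of_coeff_ne_zero (degree_le_of_natDegree_le (natDegree_legendre_le n)) ?_
  have hdesc : ((2 * n).descFactorial n : ℝ) ≠ 0 := by
    exact_mod_cast (Nat.descFactorial_pos.mpr (by omega)).ne'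
  rw [legendre, coeff_C_mul, coeff_iterate_derivative, ← two_mul, coeff_X_sq_sub_one_pow_two_mul,
    nsmul_one]
  exact mul_ne_zero (by positivity) hdesc

theorem legendre_eval_one (n : ℕ) : (legendre n).eval 1 = 1 := by
  have hfactor : ((X ^ 2 - 1) ^ n : ℝ[X]) = (X - C 1) ^ n * (X + 1) ^ n := by
    rw [← mul_pow, C_1]; ring
  rw [legendre, eval_mul, eval_C, hfactor, eval_iterate_derivative_X_sub_C_pow_mul]
  simp only [eval_pow, eval_add, eval_X, eval_one]
  field_simp
  norm_num

theorem integral_legendre_mul_eq_zero {n : ℕ} {q : ℝ[X]} (hq : q.natDegree < n) :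
    ∫ t in (-1 : ℝ)..1, (legendre n).eval t * q.eval t = 0 := by
  simp only [legendre, eval_mul, eval_C, mul_assoc, integral_const_mul]
  rw [integral_iterate_derivative_mul (le_rootMultiplicity_X_sq_sub_one_pow (by norm_num) n)
    (le_rootMultiplicity_X_sq_sub_one_pow (by norm_num) n), iterate_derivative_eq_zero hq]
  simp

theorem integral_legendre_mul_legendre_of_ne {m n : ℕ} (h : m ≠ n) :
    ∫ t in (-1 : ℝ)..1, (legendre m).eval t * (legendre n).eval t = 0 := by
  rcases h.lt_or_gt with hlt | hlt
  · simp_rw [mul_comm ((legendre m).eval _)]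
    exact integral_legendre_mul_eq_zero ((natDegree_legendre_le m).trans_lt hlt)
  · exact integral_legendre_mul_eq_zero ((natDegree_legendre_le n).trans_lt hlt)

theorem integral_legendre_mul_self (n : ℕ) :
    ∫ t in (-1 : ℝ)..1, (legendre n).eval t * (legendre n).eval t = 2 / (2 * n + 1) := by
  have hrodrigues : ∫ t in (-1 : ℝ)..1,
      (derivative^[n] ((X ^ 2 - 1) ^ n)).eval t * (derivative^[n] ((X ^ 2 - 1) ^ n)).eval t =
        (2 * n)! * ∫ t in (-1 : ℝ)..1, (1 - t ^ 2) ^ n := by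
    rw [integral_iterate_derivative_mul (le_rootMultiplicity_X_sq_sub_one_pow (by norm_num) n)
      (le_rootMultiplicity_X_sq_sub_one_pow (by norm_num) n), ← Function.iterate_add_apply,
      iterate_derivative_eq_C_of_natDegree_le ((natDegree_X_sq_sub_one_pow n).trans (two_mul n)).le,
      ← two_mul, coeff_X_sq_sub_one_pow_two_mul, mul_one, ← integral_const_mul,
      ← integral_const_mul]
    refine integral_congr fun t _ => ?_
    simp only [eval_pow, eval_sub, eval_X, eval_one, eval_C]
    rw [show 1 - t ^ 2 = -1 * (t ^ 2 - 1) by ring, mul_pow]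
    ring
  have hfact : ((2 * n + 1)! : ℝ) = (2 * n + 1) * (2 * n)! := by
    rw [Nat.factorial_succ]; push_cast; ring
  simp only [legendre, eval_mul, eval_C, mul_mul_mul_comm _ (eval _ _), integral_const_mul]
  rw [hrodrigues, integral_one_sub_sq_pow, hfact]
  field_simp
  ring

noncomputable def legendreCoeff (L : ℕ) (p : ℝ[X]) : ℝ :=
  (2 * L + 1 : ℝ) / 2 * ∫ t in (-1 : ℝ)..1, (legendre L).eval t * p.eval t

theorem eq_sum_legendreCoeff_smul_legendre {p : ℝ[X]} {N : ℕ} (hp : p.natDegree ≤ N) :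
    p = ∑ L ∈ range (N + 1), legendreCoeff L p • legendre L := by
  obtain ⟨c, hc⟩ := exists_eq_sum_smul_of_degree_eq degree_legendre (N + 1)
    ((degree_le_of_natDegree_le hp).trans_lt (by exact_mod_cast N.lt_succ_self))
  have hcoeff : ∀ L ∈ range (N + 1), legendreCoeff L p = c L := by
    intro L hL
    have hintegral : ∫ t in (-1 : ℝ)..1, (legendre L).eval t * p.eval t =
        ∑ M ∈ range (N + 1),
          c M * ∫ t in (-1 : ℝ)..1, (legendre L).eval t * (legendre M).eval t := by
      conv_lhs => rw [hc]
      simp only [eval_finsetSum, eval_smul, smul_eq_mul, mul_sum, mul_left_comm _ (c _)]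
      rw [integral_finsetSum fun M _ => by apply Continuous.intervalIntegrable; fun_prop]
      simp only [integral_const_mul]
    rw [legendreCoeff, hintegral, sum_eq_single_of_mem L hL fun M _ hM => by
      rw [integral_legendre_mul_legendre_of_ne hM.symm, mul_zero], integral_legendre_mul_self]
    field_simp
  conv_lhs => rw [hc]
  exact sum_congr rfl fun L hL => by rw [hcoeff L hL]

theorem Γ_eq_legendreCoeff (L ℓ ℓ' : ℕ) :
    Γ L ℓ ℓ' = legendreCoeff L (legendre ℓ * legendre ℓ') := by
  simp only [Γ, legendreCoeff, eval_mul, mul_assoc]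

theorem Γ_comm (L ℓ ℓ' : ℕ) : Γ L ℓ ℓ' = Γ L ℓ' ℓ := by
  rw [Γ_eq_legendreCoeff, Γ_eq_legendreCoeff, mul_comm]

theorem Γ_eq_zero_of_lt_dist {L ℓ ℓ' : ℕ} (h : L < Nat.dist ℓ ℓ') : Γ L ℓ ℓ' = 0 := by
  wlog hle : ℓ' ≤ ℓ generalizing ℓ ℓ'
  · rw [Γ_comm]; exact this (Nat.dist_comm ℓ ℓ' ▸ h) (le_of_not_ge hle)
  have hdeg : (legendre L * legendre ℓ').natDegree < ℓ := by
    have hdist := Nat.dist_eq_sub_of_le_right hle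
    have hL := natDegree_legendre_le L
    have hℓ' := natDegree_legendre_le ℓ'
    exact natDegree_mul_le.trans_lt (by omega)
  have horth := integral_legendre_mul_eq_zero hdeg
  simp only [eval_mul, mul_left_comm ((legendre ℓ).eval _)] at horth
  simp only [Γ, mul_assoc, horth, mul_zero]

theorem legendre_product_span_and_gamma_sum (ℓ ℓ' : ℕ) :
    legendre ℓ * legendre ℓ' ∈
        Submodule.span ℝ (legendre '' {L : ℕ | Nat.dist ℓ ℓ' ≤ L ∧ L ≤ ℓ + ℓ'}) ∧
      ∑ L ∈ Finset.range (ℓ + ℓ' + 1), Γ L ℓ ℓ' = 1 := by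
  have hexpansion :
      legendre ℓ * legendre ℓ' = ∑ L ∈ range (ℓ + ℓ' + 1), Γ L ℓ ℓ' • legendre L := by
    simp only [Γ_eq_legendreCoeff]
    exact eq_sum_legendreCoeff_smul_legendre (natDegree_mul_le.trans
      (add_le_add (natDegree_legendre_le ℓ) (natDegree_legendre_le ℓ')))
  constructor
  · rw [hexpansion]
    refine Submodule.sum_mem _ fun L hL => ?_
    rcases lt_or_ge L (Nat.dist ℓ ℓ') with hlt | hge
    · rw [Γ_eq_zero_of_lt_dist hlt, zero_smul]
      exact zero_mem _
    · exact Submodule.smul_mem _ _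
        (Submodule.subset_span ⟨L, ⟨hge, Nat.lt_succ_iff.mp (mem_range.mp hL)⟩, rfl⟩)
  · simpa [eval_finsetSum, legendre_eval_one] using (congrArg (eval 1) hexpansion).symm
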